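/- arXiv:2502.07661 — 3 statements merged into one kernel-verified Lean document; each statement's English description precedes it below -/
import Mathlib

section
/- Let f̂, f* : 𝒳 → [0,1]^k be probabilistic classifiers and let ŷ_x = argmax_j f̂_j(x), y*_x = argmax_j f*_j(x). Suppose that for all x, P_{Y|X=x}(Y ∈ {ŷ_x, y*_x}) ≥ 1 − δ₅ with δ₅ ∈ [0,1). Then E_{XY}[1{ŷ_X ≠ y*_X}] ≤ (1/(1−δ₅)) · E_{XY}[(1{ŷ_X ≠ Y} − 1{y*_X ≠ Y})²]. -/
/-!
On the pair `{ŷ_x, y*_x}` the disagreement indicator `1{ŷ_x ≠ y*_x}` coincides with the squared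
difference `(1{ŷ_x ≠ y} - 1{y*_x ≠ y})²`. Since this pair carries at least a `1 - δ₅` fraction of
the conditional mass at every `x`, the squared difference has conditional expectation at least
`(1 - δ₅) · 1{ŷ_x ≠ y*_x}`; summing over `x` and dividing by `1 - δ₅` gives the bound.
-/

open Finset

theorem ite_ne_eq_sq_sub_of_mem_pair {α R : Type*} [DecidableEq α] [Ring R] {a b y : α}
    (hy : y ∈ ({a, b} : Finset α)) :
    (if a ≠ b then (1 : R) else 0) =
      ((if a ≠ y then (1 : R) else 0) - (if b ≠ y then (1 : R) else 0)) ^ 2 := by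
  rcases mem_insert.1 hy with rfl | hy
  · by_cases hab : y = b <;> simp [hab, Ne.symm]
  · rw [mem_singleton.1 hy]
    by_cases hab : a = y <;> simp [hab]

theorem mul_sum_ite_ne_le_sum_mul_sq_sub {α : Type*} [Fintype α] [DecidableEq α]
    {q : α → ℝ} (hq : ∀ y, 0 ≤ q y) {c : ℝ} {a b : α}
    (hpair : c * ∑ y, q y ≤ ∑ y ∈ ({a, b} : Finset α), q y) :
    c * ∑ y, q y * (if a ≠ b then (1 : ℝ) else 0) ≤
      ∑ y, q y * ((if a ≠ y then (1 : ℝ) else 0) - (if b ≠ y then (1 : ℝ) else 0)) ^ 2 := by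
  have hind : (0 : ℝ) ≤ if a ≠ b then 1 else 0 := by split_ifs <;> norm_num
  calc c * ∑ y, q y * (if a ≠ b then (1 : ℝ) else 0)
      = (c * ∑ y, q y) * (if a ≠ b then (1 : ℝ) else 0) := by rw [← sum_mul, mul_assoc]
    _ ≤ (∑ y ∈ ({a, b} : Finset α), q y) * (if a ≠ b then (1 : ℝ) else 0) :=
        mul_le_mul_of_nonneg_right hpair hind
    _ = ∑ y ∈ ({a, b} : Finset α), q y *
          ((if a ≠ y then (1 : ℝ) else 0) - (if b ≠ y then (1 : ℝ) else 0)) ^ 2 := by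
        rw [sum_mul]
        exact sum_congr rfl fun y hy => by rw [ite_ne_eq_sq_sub_of_mem_pair hy]
    _ ≤ ∑ y, q y * ((if a ≠ y then (1 : ℝ) else 0) - (if b ≠ y then (1 : ℝ) else 0)) ^ 2 :=
        sum_le_sum_of_subset_of_nonneg (subset_univ _) fun y _ _ =>
          mul_nonneg (hq y) (sq_nonneg _)

theorem disagreement_bound_general {𝒳 𝒴 : Type*} [Fintype 𝒳] [Fintype 𝒴] [DecidableEq 𝒴]
    (p : 𝒳 → 𝒴 → ℝ) (hp : ∀ x y, 0 ≤ p x y)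
    (yhat ystar : 𝒳 → 𝒴) (δ₅ : ℝ) (hδ : δ₅ ∈ Set.Ico (0:ℝ) 1)
    (hcond : ∀ x, (1 - δ₅) * ∑ y, p x y ≤ ∑ y ∈ ({yhat x, ystar x} : Finset 𝒴), p x y) :
    ∑ x, ∑ y, p x y * (if yhat x ≠ ystar x then (1:ℝ) else 0) ≤
      (1/(1-δ₅)) * ∑ x, ∑ y, p x y *
        ((if yhat x ≠ y then (1:ℝ) else 0) - (if ystar x ≠ y then (1:ℝ) else 0))^2 := by
  rw [one_div, le_inv_mul_iff₀ (sub_pos.2 hδ.2), mul_sum]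
  exact sum_le_sum fun x _ => mul_sum_ite_ne_le_sum_mul_sq_sub (hp x) (hcond x)

/-- If for every `x` the conditional mass of `{ŷ_x, y*_x}` is at least `1 - δ₅`, then the
expected disagreement indicator is bounded by `1/(1-δ₅)` times the expected squared
indicator difference. -/
theorem disagreement_bound {𝒳 𝒴 : Type*} [Fintype 𝒳] [Fintype 𝒴] [DecidableEq 𝒴]
    (p : 𝒳 → 𝒴 → ℝ) (hp : ∀ x y, 0 ≤ p x y) (hsum : ∑ x, ∑ y, p x y = 1)
    (yhat ystar : 𝒳 → 𝒴) (δ₅ : ℝ) (hδ : δ₅ ∈ Set.Ico (0:ℝ) 1)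
    (hcond : ∀ x, (1 - δ₅) * ∑ y, p x y ≤ ∑ y ∈ ({yhat x, ystar x} : Finset 𝒴), p x y) :
    ∑ x, ∑ y, p x y * (if yhat x ≠ ystar x then (1:ℝ) else 0) ≤
      (1/(1-δ₅)) * ∑ x, ∑ y, p x y *
        ((if yhat x ≠ y then (1:ℝ) else 0) - (if ystar x ≠ y then (1:ℝ) else 0))^2 :=
  disagreement_bound_general p hp yhat ystar δ₅ hδ hcond
end

section
/- Let f̂, f* : 𝒳 → [0,1]^k, let the 0-1 loss be ℓ(p, y) = 1{argmax_j p_j ≠ y}, and assume the Bernstein condition E_{XY}[(ℓ(f̂(X),Y) − ℓ(f*(X),Y))²] ≤ B·(R_sup(f̂) − R_sup(f*))^β for constants B > 0, β ∈ (0,1]. If additionally P_{Y|X=x}(Y ∈ {ŷ_x, y*_x}) ≥ 1 − δ₅ for all x with δ₅ ∈ [0,1), then P_X(ŷ_X ≠ y*_X) ≤ (B/(1−δ₅)) · (R_sup(f̂) − R_sup(f*))^β. -/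
/-- Under the Bernstein condition for the 0-1 excess loss and a lower bound on the
conditional mass of `{ŷ_x, y*_x}`, the probability of disagreement between the empirical
and true argmax predictions is bounded by `(B/(1-δ₅)) * (R_sup(f̂) - R_sup(f*))^β`. -/
theorem disagreement_prob_bernstein {𝒳 𝒴 : Type*} [Fintype 𝒳] [Fintype 𝒴] [DecidableEq 𝒴]
    (p : 𝒳 → 𝒴 → ℝ) (hp : ∀ x y, 0 ≤ p x y) (hsum : ∑ x, ∑ y, p x y = 1)
    (fhat fstar : 𝒳 → 𝒴 → ℝ)
    (yhat ystar : 𝒳 → 𝒴)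
    (hyhat : ∀ x j, fhat x j ≤ fhat x (yhat x))
    (hystar : ∀ x j, fstar x j ≤ fstar x (ystar x))
    (B β δ₅ : ℝ) (hB : 0 < B) (hβ : β ∈ Set.Ioc (0:ℝ) 1) (hδ : δ₅ ∈ Set.Ico (0:ℝ) 1)
    (Rhat Rstar : ℝ)
    (hRhat : Rhat = ∑ x, ∑ y, p x y * (if yhat x ≠ y then (1:ℝ) else 0))
    (hRstar : Rstar = ∑ x, ∑ y, p x y * (if ystar x ≠ y then (1:ℝ) else 0))
    (hbern : ∑ x, ∑ y, p x y *
        ((if yhat x ≠ y then (1:ℝ) else 0) - (if ystar x ≠ y then (1:ℝ) else 0))^2 ≤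
      B * (Rhat - Rstar) ^ β)
    (hcond : ∀ x, (1 - δ₅) * ∑ y, p x y ≤ ∑ y ∈ ({yhat x, ystar x} : Finset 𝒴), p x y) :
    ∑ x, (∑ y, p x y) * (if yhat x ≠ ystar x then (1:ℝ) else 0) ≤
      (B/(1-δ₅)) * (Rhat - Rstar) ^ β := by
  obtain ⟨hδ0, hδ1⟩ := hδ
  have h1δ : (0:ℝ) < 1 - δ₅ := by linarith
  have key : ∀ x, (1 - δ₅) * ((∑ y, p x y) * (if yhat x ≠ ystar x then (1:ℝ) else 0)) ≤
      ∑ y, p x y * ((if yhat x ≠ y then (1:ℝ) else 0) - (if ystar x ≠ y then (1:ℝ) else 0))^2 := by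
    intro x
    by_cases h : yhat x = ystar x
    · simp only [h, ne_eq, not_true_eq_false, if_false, mul_zero]
      exact Finset.sum_nonneg fun y _ => mul_nonneg (hp x y) (sq_nonneg _)
    · simp only [ne_eq, h, not_false_eq_true, if_true, mul_one]
      calc (1 - δ₅) * ∑ y, p x y ≤ ∑ y ∈ ({yhat x, ystar x} : Finset 𝒴), p x y := hcond x
        _ = ∑ y ∈ ({yhat x, ystar x} : Finset 𝒴), p x y *
            ((if yhat x ≠ y then (1:ℝ) else 0) - (if ystar x ≠ y then (1:ℝ) else 0))^2 := by
          rw [Finset.sum_pair h, Finset.sum_pair h]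
          simp [h, Ne.symm h]
        _ ≤ ∑ y, p x y *
            ((if yhat x ≠ y then (1:ℝ) else 0) - (if ystar x ≠ y then (1:ℝ) else 0))^2 :=
          Finset.sum_le_sum_of_subset_of_nonneg (Finset.subset_univ _)
            (fun y _ _ => mul_nonneg (hp x y) (sq_nonneg _))
  have hmain : (1 - δ₅) * ∑ x, (∑ y, p x y) * (if yhat x ≠ ystar x then (1:ℝ) else 0) ≤
      B * (Rhat - Rstar) ^ β := by
    rw [Finset.mul_sum]
    exact le_trans (Finset.sum_le_sum fun x _ => key x) hbern
  rw [div_mul_eq_mul_div, le_div_iff₀ h1δ]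
  linarith [hmain]
end

section
/- Let f̂, f* : 𝒳 → (0,1]^k be probabilistic classifiers taking values in [ε,1] coordinatewise for some ε ∈ (0,1), let ℓ(p,y) = −log p_y be the log-loss, and suppose the excess loss satisfies the (β,B)-Bernstein condition E_{XY}[(ℓ(f̂(X),Y) − ℓ(f*(X),Y))²] ≤ B·(E_{XY}[ℓ(f̂(X),Y) − ℓ(f*(X),Y)])^β. Then E_{XY}[|f̂_Y(X) − f*_Y(X)|] ≤ (1/ε)·√B · (R_sup(f̂) − R_sup(f*))^{β/2}, where R_sup(f) = E_{XY}[ℓ(f(X),Y)]. -/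
/-!
On `(0, 1]` the logarithm has slope at least `1`, so `|a - b| ≤ |log a - log b|` and the mean
absolute gap of the classifiers at the true label is at most the mean absolute excess log-loss.
Jensen (Cauchy–Schwarz against the probability weights) bounds the latter by the root mean square
excess loss, which the Bernstein condition bounds by `√B · (excess risk) ^ (β / 2)`; the factor
`1 / ε ≥ 1` is then free.
-/

open Real Finset

lemma sub_le_log_sub_log {a b : ℝ} (ha : 0 < a) (hab : a ≤ b) (hb : b ≤ 1) :
    b - a ≤ log b - log a := by
  have hb0 : 0 < b := ha.trans_le hab
  have h := log_le_sub_one_of_pos (div_pos ha hb0)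
  rw [log_div ha.ne' hb0.ne', div_sub_one hb0.ne'] at h
  have : (a - b) / b ≤ a - b := by
    rw [div_le_iff₀ hb0]
    nlinarith
  linarith

lemma abs_sub_le_abs_log_sub_log {a b : ℝ} (ha : 0 < a) (ha1 : a ≤ 1) (hb : 0 < b) (hb1 : b ≤ 1) :
    |a - b| ≤ |log a - log b| := by
  rcases le_total a b with hab | hba
  · rw [abs_sub_comm, abs_sub_comm (log a), abs_of_nonneg (sub_nonneg.2 hab),
      abs_of_nonneg (sub_nonneg.2 (log_le_log ha hab))]
    exact sub_le_log_sub_log ha hab hb1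
  · rw [abs_of_nonneg (sub_nonneg.2 hba), abs_of_nonneg (sub_nonneg.2 (log_le_log hb hba))]
    exact sub_le_log_sub_log hb hba ha1

lemma sqrt_cos_two_mul_le_cos {θ : ℝ} (hθ : 0 ≤ cos θ) : √(cos (2 * θ)) ≤ cos θ := by
  rw [sqrt_le_left hθ, cos_two_mul]
  nlinarith [cos_le_one θ]

lemma sqrt_rpow_le_rpow_half {D β : ℝ} (hβ : |β| ≤ 1) : √(D ^ β) ≤ D ^ (β / 2) := by
  rcases le_or_gt 0 D with hD | hD
  · rw [sqrt_eq_rpow, ← rpow_mul hD, mul_one_div]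
  -- for `D < 0`, Mathlib's `D ^ β` is `exp (log D * β) * cos (β * π)`
  rw [rpow_def_of_neg hD, rpow_def_of_neg hD, sqrt_mul (exp_pos _).le,
    show log D * β = log D * (β / 2) + log D * (β / 2) by ring, exp_add,
    sqrt_mul_self (exp_pos _).le,
    show β * π = 2 * (β / 2 * π) by ring]
  gcongr
  obtain ⟨hβl, hβr⟩ := abs_le.1 hβ
  exact sqrt_cos_two_mul_le_cos <|
    cos_nonneg_of_mem_Icc ⟨by nlinarith [pi_pos], by nlinarith [pi_pos]⟩

lemma sum_mul_abs_le_sqrt_sum_mul_sq {ι : Type*} (s : Finset ι) {w g : ι → ℝ}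
    (hw : ∀ i ∈ s, 0 ≤ w i) (hw1 : ∑ i ∈ s, w i = 1) :
    ∑ i ∈ s, w i * |g i| ≤ √(∑ i ∈ s, w i * g i ^ 2) := by
  refine le_sqrt_of_sq_le ?_
  simpa only [hw1, one_mul] using sum_sq_le_sum_mul_sum_of_sq_le_mul s hw
    (fun i hi => mul_nonneg (hw i hi) (sq_nonneg (g i)))
    (fun i _ => (by rw [mul_pow, sq_abs]; ring : (w i * |g i|) ^ 2 = w i * (w i * g i ^ 2)).le)

/-- For classifiers taking values in `[ε,1]` and log-loss satisfying the `(β,B)`-Bernstein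
condition, the expected absolute coordinate difference at the true label is bounded by
`(1/ε) * √B * (R_sup(f̂) - R_sup(f*))^(β/2)`. -/
theorem expected_abs_diff_bound {𝒳 𝒴 : Type*} [Fintype 𝒳] [Fintype 𝒴]
    (ε : ℝ) (hε : ε ∈ Set.Ioo (0:ℝ) 1)
    (p : 𝒳 → 𝒴 → ℝ) (hp : ∀ x y, 0 ≤ p x y) (hsum : ∑ x, ∑ y, p x y = 1)
    (fhat fstar : 𝒳 → 𝒴 → ℝ)
    (hhat : ∀ x y, fhat x y ∈ Set.Icc ε 1) (hstar : ∀ x y, fstar x y ∈ Set.Icc ε 1)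
    (B β : ℝ) (hB : 0 < B) (hβ : β ∈ Set.Ioc (0:ℝ) 1)
    (hbern : ∑ x, ∑ y, p x y * ((-Real.log (fhat x y)) - (-Real.log (fstar x y)))^2 ≤
      B * (∑ x, ∑ y, p x y * ((-Real.log (fhat x y)) - (-Real.log (fstar x y)))) ^ β) :
    ∑ x, ∑ y, p x y * |fhat x y - fstar x y| ≤
      (1/ε) * Real.sqrt B *
        ((∑ x, ∑ y, p x y * (-Real.log (fhat x y))) -
          ∑ x, ∑ y, p x y * (-Real.log (fstar x y))) ^ (β/2) := by
  set Δ : 𝒳 → 𝒴 → ℝ := fun x y => -log (fhat x y) - -log (fstar x y)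
  have hrisk : (∑ x, ∑ y, p x y * -log (fhat x y)) - ∑ x, ∑ y, p x y * -log (fstar x y) =
      ∑ x, ∑ y, p x y * Δ x y := by
    simp only [Δ, mul_sub, sum_sub_distrib]
  have hpoint : ∀ x y, |fhat x y - fstar x y| ≤ |Δ x y| := fun x y => by
    rw [abs_sub_comm, show Δ x y = log (fstar x y) - log (fhat x y) from neg_sub_neg _ _]
    exact abs_sub_le_abs_log_sub_log (hε.1.trans_le (hstar x y).1) (hstar x y).2
      (hε.1.trans_le (hhat x y).1) (hhat x y).2
  have hjensen : ∑ x, ∑ y, p x y * |Δ x y| ≤ √(∑ x, ∑ y, p x y * Δ x y ^ 2) := by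
    rw [← Fintype.sum_prod_type', ← Fintype.sum_prod_type']
    exact sum_mul_abs_le_sqrt_sum_mul_sq univ (fun z _ => hp z.1 z.2)
      (by rwa [Fintype.sum_prod_type'])
  have hmain : ∑ x, ∑ y, p x y * |fhat x y - fstar x y| ≤
      √B * (∑ x, ∑ y, p x y * Δ x y) ^ (β / 2) :=
    calc ∑ x, ∑ y, p x y * |fhat x y - fstar x y| ≤ ∑ x, ∑ y, p x y * |Δ x y| :=
          sum_le_sum fun x _ => sum_le_sum fun y _ =>
            mul_le_mul_of_nonneg_left (hpoint x y) (hp x y)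
      _ ≤ √(∑ x, ∑ y, p x y * Δ x y ^ 2) := hjensen
      _ ≤ √B * √((∑ x, ∑ y, p x y * Δ x y) ^ β) := (sqrt_le_sqrt hbern).trans_eq (sqrt_mul hB.le _)
      _ ≤ √B * (∑ x, ∑ y, p x y * Δ x y) ^ (β / 2) := by
          gcongr
          exact sqrt_rpow_le_rpow_half (abs_le.2 ⟨by linarith [hβ.1], hβ.2⟩)
  rw [hrisk, mul_assoc]
  refine hmain.trans (le_mul_of_one_le_left ?_ ?_)
  · exact (sum_nonneg fun x _ => sum_nonneg fun y _ =>
      mul_nonneg (hp x y) (abs_nonneg _)).trans hmain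
  · exact one_le_one_div hε.1 hε.2.le
end
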